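/- arXiv:math/0107055 — 3 statements merged into one kernel-verified Lean document; each statement's English description precedes it below -/
import Mathlib

section
/- Let (F_m)_{m≥0} be a decreasing sequence of σ-fields and (φ_m)_{m≥0} a sequence of nonnegative integrable random variables. Then E[(Σ_m E[φ_m | F_m])²] ≤ 4·E[(Σ_m φ_m)²]. -/
/-! Write `g m = E[φ m | F m]`, `S = ∑ m, g m` and `T = ∑ m, φ m`. Expanding the square along
tails gives `S² ≤ 2 ∑ m, R m * g m` with `R m = ∑ n ≥ m, g n`, and `R m` is `F m`-measurable
because the σ-fields decrease. Hence `E[R m * g m] = E[R m * φ m] ≤ E[S * φ m]`, so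
`E[S²] ≤ 2 E[S T] ≤ 2 ‖S‖₂ ‖T‖₂` by Cauchy–Schwarz, and dividing by `‖S‖₂` gives the bound.
The division needs `E[S²] < ∞`, so the argument is run on the bounded truncations
`min (∑ m < N, g m) N` (the tail inequality survives truncation at any level) and one concludes
by monotone convergence. -/

open MeasureTheory ProbabilityTheory Finset
open scoped ENNReal

section

variable {Ω : Type*}

lemma sq_min_add_le (a b K : ℝ≥0∞) :
    min (a + b) K ^ 2 ≤ 2 * min (a + b) K * a + min b K ^ 2 := by
  set u := min (a + b) K
  set v := min b K
  have hu : u ≤ a + v := min_add_add_left a b K ▸ min_le_min_left _ le_add_self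
  have hv : v ≤ u := min_le_min_right K le_add_self
  calc u ^ 2 = u * u := sq u
    _ ≤ u * (a + v) := by gcongr
    _ = u * a + v * u := by ring
    _ ≤ u * a + v * (a + v) := by gcongr
    _ = u * a + (v * a + v ^ 2) := by ring
    _ ≤ u * a + (u * a + v ^ 2) := by gcongr
    _ = 2 * u * a + v ^ 2 := by ring

lemma sq_min_sum_le_two_mul_sum_min_tail_mul (x : ℕ → ℝ≥0∞) (K : ℝ≥0∞) (N : ℕ) :
    min (∑ n ∈ range N, x n) K ^ 2 ≤ 2 * ∑ m ∈ range N, min (∑ n ∈ Ico m N, x n) K * x m := by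
  induction N generalizing x with
  | zero => simp
  | succ N ih =>
    have htail (m : ℕ) : ∑ n ∈ Ico (m + 1) (N + 1), x n = ∑ n ∈ Ico m N, x (n + 1) :=
      (sum_Ico_add' x m N 1).symm
    rw [sum_range_succ', sum_range_succ', ← range_eq_Ico, sum_range_succ', add_comm]
    simp only [htail]
    calc _ ≤ 2 * min (x 0 + ∑ n ∈ range N, x (n + 1)) K * x 0
          + min (∑ n ∈ range N, x (n + 1)) K ^ 2 := sq_min_add_le _ _ _
      _ ≤ _ := by
        grw [ih]
        rw [mul_add, mul_assoc, add_comm]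

theorem lintegral_mul_condLExp {m m₀ : MeasurableSpace Ω} {P : Measure[m₀] Ω} (hm : m ≤ m₀)
    [SigmaFinite (P.trim hm)] {B X : Ω → ℝ≥0∞} (hB : Measurable[m] B) (hX : AEMeasurable X P) :
    ∫⁻ ω, B ω * P⁻[X|m] ω ∂P = ∫⁻ ω, B ω * X ω ∂P := by
  have htrim : (P.withDensity P⁻[X|m]).trim hm = (P.withDensity X).trim hm := by
    refine @Measure.ext _ m _ _ fun s hs => ?_
    rw [trim_measurableSet_eq hm hs, trim_measurableSet_eq hm hs, withDensity_apply _ (hm s hs),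
      withDensity_apply _ (hm s hs), setLIntegral_condLExp hm P X hs]
  simp_rw [mul_comm (B _)]
  calc ∫⁻ ω, P⁻[X|m] ω * B ω ∂P = ∫⁻ ω, B ω ∂(P.withDensity P⁻[X|m]) :=
        (lintegral_withDensity_eq_lintegral_mul _ (measurable_condLExp' m P X)
          (hB.mono hm le_rfl)).symm
    _ = ∫⁻ ω, B ω ∂(P.withDensity X) := by
        rw [← lintegral_trim hm hB, htrim, lintegral_trim hm hB]
    _ = ∫⁻ ω, X ω * B ω ∂P :=
        lintegral_withDensity_eq_lintegral_mul₀ hX (hB.mono hm le_rfl).aemeasurable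

theorem lintegral_mul_ofReal_condExp {m m₀ : MeasurableSpace Ω} {P : Measure[m₀] Ω}
    (hm : m ≤ m₀) [SigmaFinite (P.trim hm)] {B : Ω → ℝ≥0∞} (hB : Measurable[m] B) {φ : Ω → ℝ}
    (hφ : Integrable φ P) (hφ_nonneg : 0 ≤ᵐ[P] φ) :
    ∫⁻ ω, B ω * ENNReal.ofReal (P[φ|m] ω) ∂P = ∫⁻ ω, B ω * ENNReal.ofReal (φ ω) ∂P := by
  rw [← lintegral_mul_condLExp hm hB hφ.aemeasurable.ennreal_ofReal]
  refine lintegral_congr_ae ?_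
  filter_upwards [condLExp_ofReal m hφ hφ_nonneg] with ω hω
  rw [hω]

theorem lintegral_sq_le_sq_mul_of_le_mul {mΩ : MeasurableSpace Ω} {μ : Measure Ω}
    {f g : Ω → ℝ≥0∞} (hf : AEMeasurable f μ) (hg : AEMeasurable g μ) (hfin : ∫⁻ ω, f ω ^ 2 ∂μ ≠ ∞)
    {c : ℝ≥0∞} (h : ∫⁻ ω, f ω ^ 2 ∂μ ≤ c * ∫⁻ ω, f ω * g ω ∂μ) :
    ∫⁻ ω, f ω ^ 2 ∂μ ≤ c ^ 2 * ∫⁻ ω, g ω ^ 2 ∂μ := by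
  set a := ∫⁻ ω, f ω ^ 2 ∂μ
  set b := ∫⁻ ω, g ω ^ 2 ∂μ
  have holder : ∫⁻ ω, f ω * g ω ∂μ ≤ a ^ (1 / 2 : ℝ) * b ^ (1 / 2 : ℝ) := by
    simpa only [ENNReal.rpow_two, Pi.mul_apply] using
      ENNReal.lintegral_mul_le_Lp_mul_Lq μ Real.HolderConjugate.two_two hf hg
  rcases eq_or_ne a 0 with ha | ha
  · simp [ha]
  have hsq (x : ℝ≥0∞) : (x ^ (1 / 2 : ℝ)) ^ 2 = x := by
    rw [← ENNReal.rpow_natCast, ← ENNReal.rpow_mul]; norm_num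
  have hroot : a ^ (1 / 2 : ℝ) ≤ c * b ^ (1 / 2 : ℝ) := by
    have hne : a ^ (1 / 2 : ℝ) ≠ 0 := by simp [ENNReal.rpow_eq_zero_iff, ha, hfin]
    have htop : a ^ (1 / 2 : ℝ) ≠ ∞ := by simp [ENNReal.rpow_eq_top_iff, ha, hfin]
    rw [← ENNReal.mul_le_mul_iff_right hne htop, ← sq, hsq]
    calc a ≤ c * (a ^ (1 / 2 : ℝ) * b ^ (1 / 2 : ℝ)) := h.trans (by gcongr)
      _ = a ^ (1 / 2 : ℝ) * (c * b ^ (1 / 2 : ℝ)) := by ring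
  calc a = (a ^ (1 / 2 : ℝ)) ^ 2 := (hsq a).symm
    _ ≤ (c * b ^ (1 / 2 : ℝ)) ^ 2 := by gcongr
    _ = c ^ 2 * b := by rw [mul_pow, hsq]

theorem lintegral_sq_min_sum_condExp_le_two_mul {mΩ : MeasurableSpace Ω} {P : Measure Ω}
    [IsFiniteMeasure P] {F : ℕ → MeasurableSpace Ω} (hle : ∀ m, F m ≤ mΩ) (hanti : Antitone F)
    {φ : ℕ → Ω → ℝ} (hpos : ∀ m, 0 ≤ φ m) (hint : ∀ m, Integrable (φ m) P) (N : ℕ)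
    (K : ℝ≥0∞) :
    ∫⁻ ω, min (∑ m ∈ range N, ENNReal.ofReal (P[φ m|F m] ω)) K ^ 2 ∂P ≤
      2 * ∫⁻ ω, min (∑ m ∈ range N, ENNReal.ofReal (P[φ m|F m] ω)) K *
        ∑' m, ENNReal.ofReal (φ m ω) ∂P := by
  set g : ℕ → Ω → ℝ≥0∞ := fun m ω => ENNReal.ofReal (P[φ m|F m] ω)
  set h : ℕ → Ω → ℝ≥0∞ := fun m ω => ENNReal.ofReal (φ m ω)
  set U : Ω → ℝ≥0∞ := fun ω => min (∑ m ∈ range N, g m ω) K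
  set tail : ℕ → Ω → ℝ≥0∞ := fun m ω => min (∑ n ∈ Ico m N, g n ω) K
  have htail_meas (m : ℕ) : Measurable[F m] (tail m) := by
    refine (Finset.measurable_sum _ fun n hn => ?_).min measurable_const
    exact stronglyMeasurable_condExp.measurable.ennreal_ofReal.mono
      (hanti (mem_Ico.1 hn).1) le_rfl
  have hg_meas (m : ℕ) : Measurable (g m) :=
    (stronglyMeasurable_condExp.measurable.ennreal_ofReal).mono (hle m) le_rfl
  have hU_meas : Measurable U := (Finset.measurable_sum _ fun m _ => hg_meas m).min measurable_const
  calc ∫⁻ ω, U ω ^ 2 ∂P ≤ ∫⁻ ω, 2 * ∑ m ∈ range N, tail m ω * g m ω ∂P :=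
        lintegral_mono fun ω => sq_min_sum_le_two_mul_sum_min_tail_mul (g · ω) K N
    _ = 2 * ∑ m ∈ range N, ∫⁻ ω, tail m ω * g m ω ∂P := by
        rw [lintegral_const_mul' _ _ ENNReal.ofNat_ne_top,
          lintegral_finsetSum (f := fun m ω => tail m ω * g m ω) _ fun m _ =>
            ((htail_meas m).mono (hle m) le_rfl).mul (hg_meas m)]
    _ = 2 * ∑ m ∈ range N, ∫⁻ ω, tail m ω * h m ω ∂P := by
        congr 1
        exact sum_congr rfl fun m _ => lintegral_mul_ofReal_condExp (hle m) (htail_meas m)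
          (hint m) (Filter.Eventually.of_forall (hpos m))
    _ ≤ 2 * ∑ m ∈ range N, ∫⁻ ω, U ω * h m ω ∂P := by
        gcongr with m _ ω
        exact min_le_min_right K
          (sum_le_sum_of_subset (by rw [range_eq_Ico]; exact Ico_subset_Ico_left m.zero_le))
    _ = 2 * ∫⁻ ω, U ω * ∑ m ∈ range N, h m ω ∂P := by
        rw [← lintegral_finsetSum' (f := fun m ω => U ω * h m ω) _ fun m _ =>
          hU_meas.aemeasurable.mul (hint m).aemeasurable.ennreal_ofReal]
        simp_rw [mul_sum]
    _ ≤ 2 * ∫⁻ ω, U ω * ∑' m, h m ω ∂P := by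
        gcongr with ω
        exact ENNReal.sum_le_tsum _

theorem lintegral_sq_tsum_eq_iSup_lintegral_sq_min_sum {mΩ : MeasurableSpace Ω} {μ : Measure Ω}
    {x : ℕ → Ω → ℝ≥0∞} (hx : ∀ n, Measurable (x n)) :
    ∫⁻ ω, (∑' n, x n ω) ^ 2 ∂μ = ⨆ N : ℕ, ∫⁻ ω, min (∑ n ∈ range N, x n ω) N ^ 2 ∂μ := by
  have hmono (ω : Ω) : Monotone fun N : ℕ => min (∑ n ∈ range N, x n ω) N := fun N M hNM =>
    min_le_min (sum_le_sum_of_subset (range_subset_range.2 hNM)) (Nat.mono_cast hNM)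
  rw [← lintegral_iSup (fun N => ((Finset.measurable_sum _ fun n _ => hx n).min
    measurable_const).pow_const 2) fun N M hNM ω => pow_le_pow_left' (hmono ω hNM) 2]
  refine lintegral_congr fun ω => ?_
  rw [← ENNReal.iSup_pow, iSup_inf_of_monotone (fun N M hNM => sum_le_sum_of_subset
    (range_subset_range.2 hNM)) Nat.mono_cast, ENNReal.iSup_natCast, inf_top_eq,
    ENNReal.tsum_eq_iSup_nat]

end

/-- Burkholder–Davis–Gundy type inequality, decreasing σ-fields.
For a decreasing sequence of σ-fields `F m` and nonnegative integrable `φ m`,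
`E[(Σ_m E[φ m | F m])²] ≤ 4 E[(Σ_m φ m)²]`, sums interpreted in `[0,∞]`. -/
theorem lintegral_sq_tsum_condexp_le_of_antitone
    {Ω : Type*} {mΩ : MeasurableSpace Ω}
    (P : Measure Ω) [IsProbabilityMeasure P]
    (F : ℕ → MeasurableSpace Ω) (hle : ∀ m, F m ≤ mΩ) (hanti : Antitone F)
    (φ : ℕ → Ω → ℝ) (hpos : ∀ m, 0 ≤ φ m) (hint : ∀ m, Integrable (φ m) P) :
    ∫⁻ ω, (∑' m : ℕ, ENNReal.ofReal ((P[φ m|F m]) ω)) ^ 2 ∂P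
      ≤ 4 * ∫⁻ ω, (∑' m : ℕ, ENNReal.ofReal (φ m ω)) ^ 2 ∂P := by
  have hg_meas (m : ℕ) : Measurable fun ω => ENNReal.ofReal ((P[φ m|F m]) ω) :=
    (stronglyMeasurable_condExp.measurable.ennreal_ofReal).mono (hle m) le_rfl
  rw [lintegral_sq_tsum_eq_iSup_lintegral_sq_min_sum hg_meas]
  refine iSup_le fun N => ?_
  have hfin : ∫⁻ ω, min (∑ m ∈ range N, ENNReal.ofReal ((P[φ m|F m]) ω)) N ^ 2 ∂P ≠ ∞ :=
    ne_top_of_le_ne_top (lintegral_const_lt_top (by simp : (N : ℝ≥0∞) ^ 2 ≠ ∞)).ne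
      (lintegral_mono fun ω => pow_le_pow_left' (min_le_right _ _) 2)
  have hbound := lintegral_sq_le_sq_mul_of_le_mul
    ((Finset.measurable_sum _ fun m _ => hg_meas m).min measurable_const).aemeasurable
    (AEMeasurable.tsum fun m => (hint m).aemeasurable.ennreal_ofReal) hfin
    (lintegral_sq_min_sum_condExp_le_two_mul hle hanti hpos hint N N)
  exact hbound.trans_eq (by norm_num)
end

section
/- Let (F_m)_{m≥0} be an increasing sequence of σ-fields and (φ_m)_{m≥0} a sequence of nonnegative integrable random variables. Then E[(Σ_m E[φ_m | F_m])²] ≤ 4·E[(Σ_m φ_m)²]. -/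
/-!
Work in `[0,∞]` with the Lebesgue conditional expectations `gₘ = P⁻[fₘ|Fₘ]`, which agree a.e. with
`ofReal (P[φₘ|Fₘ])` for `fₘ = ofReal φₘ`. Expanding the square, `(∑ gₘ)² ≤ 2 ∑ₘ gₘ ∑_{k ≥ m} g_k`,
and since `gₘ` is `F_k`-measurable for `k ≥ m`, integration turns `gₘ g_k` into `gₘ f_k`. Hence
`E (∑ g)² ≤ 2 E[(∑ g)(∑ f)] ≤ 2 ‖∑ g‖₂ ‖∑ f‖₂` by Cauchy–Schwarz, i.e. `‖∑ g‖₂ ≤ 2 ‖∑ f‖₂`.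
Dividing by `‖∑ g‖₂` needs it finite, so the argument is run on bounded truncations of the `gₘ`
and passed to the limit by monotone convergence.
-/

open MeasureTheory ProbabilityTheory
open scoped ENNReal

theorem ENNReal.tsum_ite_le_eq_tsum_add (u : ℕ → ℝ≥0∞) (m : ℕ) :
    ∑' k, (if m ≤ k then u k else 0) = ∑' k, u (k + m) := by
  rw [← (add_left_injective m).tsum_eq]
  · simp
  · intro k hk
    have : m ≤ k := by by_contra h; simp [h] at hk
    exact ⟨k - m, Nat.sub_add_cancel this⟩

theorem ENNReal.sq_tsum_le_two_mul_tsum_mul_tsum_add (u : ℕ → ℝ≥0∞) :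
    (∑' m, u m) ^ 2 ≤ 2 * ∑' m, u m * ∑' k, u (k + m) := by
  have hsplit : ∀ m k, u m * u k
      ≤ (if m ≤ k then u m * u k else 0) + (if k ≤ m then u k * u m else 0) := by
    intro m k
    rcases le_total m k with h | h
    · exact le_add_right (by simp [h])
    · exact le_add_left (by simp [h, mul_comm])
  have htail : ∑' m, ∑' k, (if m ≤ k then u m * u k else 0) = ∑' m, u m * ∑' k, u (k + m) := by
    simp_rw [← mul_ite_zero, ENNReal.tsum_mul_left, ENNReal.tsum_ite_le_eq_tsum_add]
  calc (∑' m, u m) ^ 2 = ∑' m, ∑' k, u m * u k := by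
        rw [sq, ← ENNReal.tsum_mul_right]
        exact tsum_congr fun m => ENNReal.tsum_mul_left.symm
    _ ≤ ∑' m, ∑' k, ((if m ≤ k then u m * u k else 0) + (if k ≤ m then u k * u m else 0)) := by
        gcongr with m k; exact hsplit m k
    _ = 2 * ∑' m, u m * ∑' k, u (k + m) := by
        simp_rw [ENNReal.tsum_add]
        rw [ENNReal.tsum_comm (f := fun m k => if k ≤ m then u k * u m else 0), htail, two_mul]

theorem ENNReal.tsum_iSup_eq_iSup_tsum {α : Type*} {v : ℕ → α → ℝ≥0∞} (hv : Monotone v) :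
    ∑' a, ⨆ n, v n a = ⨆ n, ∑' a, v n a := by
  let _ : MeasurableSpace α := ⊤
  simp_rw [← MeasureTheory.lintegral_count]
  exact MeasureTheory.lintegral_iSup (fun _ => measurable_from_top) hv

/-- Cutting the `m`-th term of a series off at `truncLevel n m` keeps `n` terms, each at most `n`,
so the truncated sums are bounded and increase to the full sum. -/
def truncLevel (n m : ℕ) : ℝ≥0∞ := if m < n then n else 0

theorem monotone_truncLevel : Monotone truncLevel := by
  intro n n' hn m
  unfold truncLevel
  split_ifs with h h' <;> first | exact_mod_cast hn | omega | simp

theorem iSup_truncLevel (m : ℕ) : ⨆ n, truncLevel n m = ∞ := by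
  refine top_unique (ENNReal.iSup_natCast.symm.le.trans (iSup_mono' fun n => ⟨n + m + 1, ?_⟩))
  simp only [truncLevel, show m < n + m + 1 by omega, if_true]
  exact_mod_cast (by omega : n ≤ n + m + 1)

theorem tsum_truncLevel (n : ℕ) : ∑' m, truncLevel n m = n * n := by
  rw [tsum_eq_sum (s := Finset.range n) fun m hm => by simp_all [truncLevel]]
  rw [Finset.sum_congr rfl (g := fun _ => (n : ℝ≥0∞)) fun m hm => by simp_all [truncLevel]]
  simp

theorem ENNReal.tsum_eq_iSup_tsum_min_truncLevel (g : ℕ → ℝ≥0∞) :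
    ∑' m, g m = ⨆ n, ∑' m, min (g m) (truncLevel n m) := by
  rw [← ENNReal.tsum_iSup_eq_iSup_tsum (v := fun n m => min (g m) (truncLevel n m))
    fun n n' hn m => min_le_min_left _ (monotone_truncLevel hn m)]
  congr with m
  rw [← inf_iSup_eq, iSup_truncLevel]
  simp

namespace MeasureTheory

variable {Ω : Type*} {mΩ₀ : MeasurableSpace Ω} {P : Measure[mΩ₀] Ω}

theorem lintegral_mul_condLExp {m : MeasurableSpace Ω} (hm : m ≤ mΩ₀) [SigmaFinite (P.trim hm)]
    {X h : Ω → ℝ≥0∞} (hX : AEMeasurable X P) (hh : Measurable[m] h) :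
    ∫⁻ ω, h ω * P⁻[X|m] ω ∂P = ∫⁻ ω, h ω * X ω ∂P := by
  have htrim : (P.withDensity P⁻[X|m]).trim hm = (P.withDensity X).trim hm := by
    ext s hs
    rw [trim_measurableSet_eq hm hs, trim_measurableSet_eq hm hs, withDensity_apply _ (hm s hs),
      withDensity_apply _ (hm s hs), setLIntegral_condLExp hm P X hs]
  have hh' : AEMeasurable h P := (hh.mono hm le_rfl).aemeasurable
  calc ∫⁻ ω, h ω * P⁻[X|m] ω ∂P = ∫⁻ ω, h ω ∂P.withDensity P⁻[X|m] := by
        rw [lintegral_withDensity_eq_lintegral_mul₀ (measurable_condLExp' m P X).aemeasurable hh']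
        simp_rw [Pi.mul_apply, mul_comm]
    _ = ∫⁻ ω, h ω ∂P.withDensity X := by rw [← lintegral_trim hm hh, htrim, lintegral_trim hm hh]
    _ = ∫⁻ ω, h ω * X ω ∂P := by
        rw [lintegral_withDensity_eq_lintegral_mul₀ hX hh']
        simp_rw [Pi.mul_apply, mul_comm]

theorem sq_lintegral_mul_le_lintegral_sq_mul {A B : Ω → ℝ≥0∞} (hA : AEMeasurable A P)
    (hB : AEMeasurable B P) :
    (∫⁻ ω, A ω * B ω ∂P) ^ 2 ≤ (∫⁻ ω, A ω ^ 2 ∂P) * ∫⁻ ω, B ω ^ 2 ∂P := by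
  have := ENNReal.lintegral_mul_le_Lp_mul_Lq P Real.HolderConjugate.two_two hA hB
  simp only [Pi.mul_apply, ENNReal.rpow_two] at this
  calc _ ≤ ((∫⁻ ω, A ω ^ 2 ∂P) ^ (1 / 2 : ℝ) * (∫⁻ ω, B ω ^ 2 ∂P) ^ (1 / 2 : ℝ)) ^ 2 := by gcongr
    _ = _ := by
      rw [mul_pow, ← ENNReal.rpow_two, ← ENNReal.rpow_two, ← ENNReal.rpow_mul, ← ENNReal.rpow_mul]
      norm_num

theorem lintegral_sq_le_of_lintegral_sq_le_mul {A B : Ω → ℝ≥0∞} (hA : AEMeasurable A P)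
    (hB : AEMeasurable B P) (hfin : ∫⁻ ω, A ω ^ 2 ∂P ≠ ∞) {c : ℝ≥0∞}
    (h : ∫⁻ ω, A ω ^ 2 ∂P ≤ c * ∫⁻ ω, A ω * B ω ∂P) :
    ∫⁻ ω, A ω ^ 2 ∂P ≤ c ^ 2 * ∫⁻ ω, B ω ^ 2 ∂P := by
  set x := ∫⁻ ω, A ω ^ 2 ∂P
  rcases eq_or_ne x 0 with hx | hx
  · simp [hx]
  refine (ENNReal.mul_le_mul_iff_right hx hfin).mp ?_
  calc x * x ≤ (c * ∫⁻ ω, A ω * B ω ∂P) ^ 2 := by rw [← sq]; gcongr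
    _ ≤ c ^ 2 * (x * ∫⁻ ω, B ω ^ 2 ∂P) := by
        rw [mul_pow]
        gcongr
        exact sq_lintegral_mul_le_lintegral_sq_mul hA hB
    _ = x * (c ^ 2 * ∫⁻ ω, B ω ^ 2 ∂P) := by ring

section Adapted

variable [IsFiniteMeasure P] {F : ℕ → MeasurableSpace Ω} {f : ℕ → Ω → ℝ≥0∞}

theorem lintegral_mul_tsum_condLExp_le (hle : ∀ m, F m ≤ mΩ₀) (hmono : Monotone F)
    (hf : ∀ m, AEMeasurable (f m) P) {u : Ω → ℝ≥0∞} {m : ℕ} (hu : Measurable[F m] u) :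
    ∫⁻ ω, u ω * ∑' k, P⁻[f (k + m)|F (k + m)] ω ∂P ≤ ∫⁻ ω, u ω * ∑' k, f k ω ∂P := by
  have hu' : Measurable u := hu.mono (hle m) le_rfl
  calc ∫⁻ ω, u ω * ∑' k, P⁻[f (k + m)|F (k + m)] ω ∂P
      = ∑' k, ∫⁻ ω, u ω * P⁻[f (k + m)|F (k + m)] ω ∂P := by
        simp_rw [← ENNReal.tsum_mul_left]
        exact lintegral_tsum fun k => (hu'.mul (measurable_condLExp' _ _ _)).aemeasurable
    _ = ∑' k, ∫⁻ ω, u ω * f (k + m) ω ∂P := by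
        congr with k
        exact lintegral_mul_condLExp (hle _) (hf _) (hu.mono (hmono (Nat.le_add_left m k)) le_rfl)
    _ = ∫⁻ ω, u ω * ∑' k, f (k + m) ω ∂P := by
        simp_rw [← ENNReal.tsum_mul_left]
        exact (lintegral_tsum fun k => hu'.aemeasurable.mul (hf _)).symm
    _ ≤ ∫⁻ ω, u ω * ∑' k, f k ω ∂P := by
        gcongr ∫⁻ ω, u ω * ?_ ∂P with ω
        exact ENNReal.tsum_comp_le_tsum_of_injective (add_left_injective m) (f · ω)

theorem lintegral_sq_tsum_le_of_le_condLExp (hle : ∀ m, F m ≤ mΩ₀) (hmono : Monotone F)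
    (hf : ∀ m, AEMeasurable (f m) P) {u : ℕ → Ω → ℝ≥0∞} (hu : ∀ m, Measurable[F m] (u m))
    (hu_le : ∀ m, u m ≤ P⁻[f m|F m]) (hfin : ∫⁻ ω, (∑' m, u m ω) ^ 2 ∂P ≠ ∞) :
    ∫⁻ ω, (∑' m, u m ω) ^ 2 ∂P ≤ 4 * ∫⁻ ω, (∑' m, f m ω) ^ 2 ∂P := by
  have hu' : ∀ m, Measurable (u m) := fun m => (hu m).mono (hle m) le_rfl
  have hB : AEMeasurable (fun ω => ∑' m, f m ω) P := AEMeasurable.tsum hf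
  have hsq_le : ∫⁻ ω, (∑' m, u m ω) ^ 2 ∂P ≤ 2 * ∫⁻ ω, (∑' m, u m ω) * ∑' k, f k ω ∂P :=
    calc ∫⁻ ω, (∑' m, u m ω) ^ 2 ∂P
        ≤ ∫⁻ ω, 2 * ∑' m, u m ω * ∑' k, P⁻[f (k + m)|F (k + m)] ω ∂P := by
          refine lintegral_mono fun ω => (ENNReal.sq_tsum_le_two_mul_tsum_mul_tsum_add _).trans ?_
          gcongr with m k
          exact hu_le _ ω
      _ = 2 * ∑' m, ∫⁻ ω, u m ω * ∑' k, P⁻[f (k + m)|F (k + m)] ω ∂P := by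
          rw [lintegral_const_mul' _ _ ENNReal.ofNat_ne_top]
          exact congrArg _ (lintegral_tsum fun m =>
            ((hu' m).mul (Measurable.tsum fun k => measurable_condLExp' _ _ _)).aemeasurable)
      _ ≤ 2 * ∑' m, ∫⁻ ω, u m ω * ∑' k, f k ω ∂P := by
          gcongr 2 * ?_
          exact ENNReal.tsum_le_tsum fun m => lintegral_mul_tsum_condLExp_le hle hmono hf (hu m)
      _ = 2 * ∫⁻ ω, (∑' m, u m ω) * ∑' k, f k ω ∂P := by
          simp_rw [← ENNReal.tsum_mul_right]
          exact congrArg _ (lintegral_tsum fun m => (hu' m).aemeasurable.mul hB).symm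
  simpa [show (2 : ℝ≥0∞) ^ 2 = 4 by norm_num] using
    lintegral_sq_le_of_lintegral_sq_le_mul (Measurable.tsum hu').aemeasurable hB hfin hsq_le

theorem lintegral_sq_tsum_condLExp_le (hle : ∀ m, F m ≤ mΩ₀) (hmono : Monotone F)
    (hf : ∀ m, AEMeasurable (f m) P) :
    ∫⁻ ω, (∑' m, P⁻[f m|F m] ω) ^ 2 ∂P ≤ 4 * ∫⁻ ω, (∑' m, f m ω) ^ 2 ∂P := by
  set A : ℕ → Ω → ℝ≥0∞ := fun n ω => ∑' m, min (P⁻[f m|F m] ω) (truncLevel n m)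
  have hA_le : ∀ n ω, A n ω ≤ n * n := fun n ω =>
    (ENNReal.tsum_le_tsum fun m => min_le_right _ _).trans (tsum_truncLevel n).le
  have hA_fin : ∀ n, ∫⁻ ω, A n ω ^ 2 ∂P ≠ ∞ := fun n =>
    ne_top_of_le_ne_top (by rw [lintegral_const]; finiteness)
      (lintegral_mono fun ω => pow_le_pow_left' (hA_le n ω) 2)
  have hA_mono : Monotone A := fun n n' hn ω =>
    ENNReal.tsum_le_tsum fun m => min_le_min_left _ (monotone_truncLevel hn m)
  calc ∫⁻ ω, (∑' m, P⁻[f m|F m] ω) ^ 2 ∂P = ∫⁻ ω, ⨆ n, A n ω ^ 2 ∂P := by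
        congr with ω
        rw [ENNReal.tsum_eq_iSup_tsum_min_truncLevel, (pow_left_mono 2).map_iSup_of_continuousAt
          (ENNReal.continuous_pow 2).continuousAt (by simp)]
    _ = ⨆ n, ∫⁻ ω, A n ω ^ 2 ∂P := lintegral_iSup
        (fun n => (Measurable.tsum fun m =>
          ((measurable_condLExp' _ _ _).min measurable_const)).pow_const 2)
        (fun n n' hn ω => pow_le_pow_left' (hA_mono hn ω) 2)
    _ ≤ 4 * ∫⁻ ω, (∑' m, f m ω) ^ 2 ∂P := iSup_le fun n =>
        lintegral_sq_tsum_le_of_le_condLExp hle hmono hf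
          (fun m => (measurable_condLExp _ _ _).min measurable_const)
          (fun m ω => min_le_left _ _) (hA_fin n)

end Adapted

end MeasureTheory

/-- Burkholder–Davis–Gundy type inequality, increasing σ-fields.
For an increasing sequence of σ-fields `F m` and nonnegative integrable `φ m`,
`E[(Σ_m E[φ m | F m])²] ≤ 4 E[(Σ_m φ m)²]`, sums interpreted in `[0,∞]`. -/
theorem lintegral_sq_tsum_condexp_le_of_monotone
    {Ω : Type*} {mΩ : MeasurableSpace Ω}
    (P : Measure Ω) [IsProbabilityMeasure P]
    (F : ℕ → MeasurableSpace Ω) (hle : ∀ m, F m ≤ mΩ) (hmono : Monotone F)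
    (φ : ℕ → Ω → ℝ) (hpos : ∀ m, 0 ≤ φ m) (hint : ∀ m, Integrable (φ m) P) :
    ∫⁻ ω, (∑' m : ℕ, ENNReal.ofReal ((P[φ m|F m]) ω)) ^ 2 ∂P
      ≤ 4 * ∫⁻ ω, (∑' m : ℕ, ENNReal.ofReal (φ m ω)) ^ 2 ∂P := by
  have hcond : ∀ᵐ ω ∂P, ∀ m, ENNReal.ofReal ((P[φ m|F m]) ω)
      = P⁻[fun ω => ENNReal.ofReal (φ m ω)|F m] ω := ae_all_iff.2 fun m =>
    (condLExp_ofReal (F m) (hint m) (.of_forall (hpos m))).symm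
  calc ∫⁻ ω, (∑' m : ℕ, ENNReal.ofReal ((P[φ m|F m]) ω)) ^ 2 ∂P
      = ∫⁻ ω, (∑' m : ℕ, P⁻[fun ω => ENNReal.ofReal (φ m ω)|F m] ω) ^ 2 ∂P :=
        lintegral_congr_ae (hcond.mono fun ω h => by simp_rw [h])
    _ ≤ 4 * ∫⁻ ω, (∑' m : ℕ, ENNReal.ofReal (φ m ω)) ^ 2 ∂P :=
        lintegral_sq_tsum_condLExp_le hle hmono fun m => (hint m).aemeasurable.ennreal_ofReal
end

section
/- Let p be a transition kernel on countable S invariant under a transitive group Π of permutations (p(πx, πy) = p(x,y) for all π ∈ Π), let X, Y be independent chains with kernel p started at o, let G_n(x,z) := Σ_{k=0}^n P_x[X_k = z], and I_n := Σ_{k,m=0}^n 1{X_k = Y_m}. Then E[I_n²] ≤ 4·(E[I_n])². -/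
open MeasureTheory ProbabilityTheory

open Classical in
/-- `X` is a Markov chain on a countable state space with transition kernel `p`
and initial state `x₀`, under the probability measure `P`: the finite-dimensional
distributions are given by products of transition probabilities. -/
def IsMarkovChain {Ω S : Type*} [MeasurableSpace Ω] [MeasurableSpace S]
    (P : Measure Ω) (X : ℕ → Ω → S) (p : S → S → ENNReal) (x₀ : S) : Prop :=
  (∀ n, Measurable (X n)) ∧
  ∀ (n : ℕ) (γ : ℕ → S), P {ω | ∀ i ≤ n, X i ω = γ i}
    = (if γ 0 = x₀ then 1 else 0) * ∏ i ∈ Finset.range n, p (γ i) (γ (i + 1))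

/-- A chain is transient if a.s. each state is visited only finitely often. -/
def Transient {Ω S : Type*} [MeasurableSpace Ω] (P : Measure Ω) (X : ℕ → Ω → S) : Prop :=
  ∀ᵐ ω ∂P, ∀ z : S, {m : ℕ | X m ω = z}.Finite

/-- The indices of the loop-erasure of an infinite path `γ` in which every state
occurs finitely often: `leIdx γ 0 = 0`, and `leIdx γ (j+1) = k + 1` where `k` is the
last index with `γ k = γ (leIdx γ j)`. -/
noncomputable def leIdx {S : Type*} (γ : ℕ → S) : ℕ → ℕ
  | 0 => 0
  | j + 1 => sSup {k | γ k = γ (leIdx γ j)} + 1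

/-- The loop-erasure of a path, viewed as a set of states. -/
noncomputable def loopErasure {S : Type*} (γ : ℕ → S) : Set S :=
  Set.range fun j => γ (leIdx γ j)


/-!
Write `G(x, z) = ∑_{k ≤ n} pᵏ(x, z)` and `A(z, w) = ∑_{k, i ≤ n} P[X_k = z, X_i = w]`.
By independence, `E[I_n] = ∑_z G(o, z)²` and `E[I_n²] = ∑_{z, w} A(z, w)²`, and the
Markov property gives `A(z, w) ≤ G(o, z) G(z, w) + G(o, w) G(w, z)`. With
`(a + b)² ≤ 2a² + 2b²` and the symmetry in `(z, w)`,
`E[I_n²] ≤ 4 ∑_z G(o, z)² ∑_w G(z, w)²`, and transitivity makes the inner sum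
`∑_w G(z, w)²` independent of `z`, hence equal to `E[I_n]`.
-/

open Finset
open scoped ENNReal

section Kernel

variable {S : Type*}

open Classical in
noncomputable def kernelPow (p : S → S → ℝ≥0∞) : ℕ → S → S → ℝ≥0∞
  | 0 => fun x z => if x = z then 1 else 0
  | k + 1 => fun x z => ∑' t, kernelPow p k x t * p t z

noncomputable def greenFn (p : S → S → ℝ≥0∞) (n : ℕ) (x z : S) : ℝ≥0∞ :=
  ∑ k ∈ range (n + 1), kernelPow p k x z

variable {p : S → S → ℝ≥0∞}

open Classical in
lemma kernelPow_zero_apply (x z : S) : kernelPow p 0 x z = if x = z then 1 else 0 := rfl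

lemma kernelPow_succ_apply (k : ℕ) (x z : S) :
    kernelPow p (k + 1) x z = ∑' t, kernelPow p k x t * p t z := rfl

lemma kernelPow_perm (π : Equiv.Perm S) (hπ : ∀ a b, p (π a) (π b) = p a b) (k : ℕ) (x z : S) :
    kernelPow p k (π x) (π z) = kernelPow p k x z := by
  induction k generalizing z with
  | zero => classical exact if_congr π.injective.eq_iff rfl rfl
  | succ k ih =>
    rw [kernelPow_succ_apply, kernelPow_succ_apply, ← π.tsum_eq]
    simp only [ih, hπ]

lemma greenFn_perm (π : Equiv.Perm S) (hπ : ∀ a b, p (π a) (π b) = p a b) (n : ℕ) (x z : S) :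
    greenFn p n (π x) (π z) = greenFn p n x z :=
  sum_congr rfl fun k _ => kernelPow_perm π hπ k x z

lemma tsum_greenFn_sq_eq_of_transitive
    (htrans : ∀ x y : S, ∃ π : Equiv.Perm S, (∀ a b, p (π a) (π b) = p a b) ∧ π x = y)
    (n : ℕ) (x y : S) :
    ∑' w, greenFn p n y w ^ 2 = ∑' w, greenFn p n x w ^ 2 := by
  obtain ⟨π, hπ, rfl⟩ := htrans x y
  rw [← π.tsum_eq]
  simp only [greenFn_perm π hπ]

end Kernel

lemma ENNReal.add_sq_le (a b : ℝ≥0∞) : (a + b) ^ 2 ≤ 2 * (a ^ 2 + b ^ 2) := by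
  have h := ENNReal.rpow_add_le_mul_rpow_add_rpow a b (p := 2) one_le_two
  norm_num [ENNReal.rpow_two] at h
  exact h

lemma sum_range_sum_range_ite_le (f g : ℕ → ℝ≥0∞) (n : ℕ) :
    ∑ k ∈ range n, ∑ i ∈ range n, (if k ≤ i then f k * g (i - k) else 0)
      ≤ (∑ k ∈ range n, f k) * ∑ l ∈ range n, g l := by
  rw [sum_mul]
  gcongr with k hk
  have hIco : (range n).filter (k ≤ ·) = Ico k n := by
    ext i
    simp only [mem_filter, mem_range, mem_Ico]
    omega
  rw [← sum_filter, hIco, sum_Ico_eq_sum_range, mul_sum]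
  simp only [add_tsub_cancel_left]
  exact sum_le_sum_of_subset (range_subset_range.mpr (Nat.sub_le n k))

lemma tsum_tsum_add_sq_le {S : Type*} (G : S → S → ℝ≥0∞) (o : S)
    (hG : ∀ z, ∑' w, G z w ^ 2 = ∑' w, G o w ^ 2) :
    ∑' z, ∑' w, (G o z * G z w + G o w * G w z) ^ 2 ≤ 4 * (∑' z, G o z ^ 2) ^ 2 := by
  calc ∑' z, ∑' w, (G o z * G z w + G o w * G w z) ^ 2
      ≤ ∑' z, ∑' w, 2 * ((G o z * G z w) ^ 2 + (G o w * G w z) ^ 2) := by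
        gcongr with z w
        exact ENNReal.add_sq_le _ _
    _ = 2 * (∑' z, ∑' w, (G o z * G z w) ^ 2) + 2 * ∑' z, ∑' w, (G o w * G w z) ^ 2 := by
        simp only [ENNReal.tsum_mul_left, ENNReal.tsum_add, mul_add]
    _ = 4 * ∑' z, ∑' w, (G o z * G z w) ^ 2 := by
        rw [ENNReal.tsum_comm (f := fun z w => (G o w * G w z) ^ 2)]
        ring
    _ = 4 * ∑' z, G o z ^ 2 * ∑' w, G o w ^ 2 := by
        simp_rw [mul_pow, ENNReal.tsum_mul_left, hG]
    _ = 4 * (∑' z, G o z ^ 2) ^ 2 := by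
        rw [ENNReal.tsum_mul_right, sq]

section MarkovChain

variable {Ω S : Type*}

def pathPrefix (X : ℕ → Ω → S) (m : ℕ) (ω : Ω) : Fin (m + 1) → S := fun j => X j ω

variable [MeasurableSpace Ω] [MeasurableSpace S] {P : Measure Ω}

lemma measure_preimage_inter_eq_tsum {α : Type*} [MeasurableSpace α] [Countable α]
    [MeasurableSingletonClass α] {f : Ω → α} (hf : Measurable f) (A : Set α) {E : Set Ω}
    (hE : MeasurableSet E) :
    P (f ⁻¹' A ∩ E) = ∑' a, A.indicator (fun a => P (f ⁻¹' {a} ∩ E)) a := by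
  have hA : MeasurableSet A := A.to_countable.measurableSet
  have h := Measure.tsum_indicator_apply_singleton ((P.restrict E).map f) A hA
  simp only [Measure.map_apply hf (measurableSet_singleton _), Measure.map_apply hf hA,
    Measure.restrict_apply' hE] at h
  exact h.symm

namespace IsMarkovChain

variable {X : ℕ → Ω → S} {p : S → S → ℝ≥0∞} {o : S}

lemma measurable_pathPrefix (hX : IsMarkovChain P X p o) (m : ℕ) :
    Measurable (pathPrefix X m) :=
  measurable_pi_lambda _ fun j => hX.1 j

open Classical in
lemma measure_zero_eq (hX : IsMarkovChain P X p o) (z : S) :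
    P {ω | X 0 ω = z} = if z = o then 1 else 0 := by
  simpa using hX.2 0 fun _ => z

lemma measure_pathPrefix_inter_eq (hX : IsMarkovChain P X p o) (m : ℕ) (g : Fin (m + 1) → S)
    (w : S) :
    P (pathPrefix X m ⁻¹' {g} ∩ {ω | X (m + 1) ω = w})
      = P (pathPrefix X m ⁻¹' {g}) * p (g (Fin.last m)) w := by
  let γ : ℕ → S := fun i => if h : i ≤ m then g ⟨i, Nat.lt_succ_of_le h⟩ else w
  have hcyl : pathPrefix X m ⁻¹' {g} = {ω | ∀ i ≤ m, X i ω = γ i} := by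
    ext ω
    simp only [Set.mem_preimage, Set.mem_singleton_iff, funext_iff, pathPrefix,
      Set.mem_ofPred_eq, Fin.forall_iff, Nat.lt_succ_iff]
    exact forall₂_congr fun i hi => by simp [γ, hi]
  have hcyl' : pathPrefix X m ⁻¹' {g} ∩ {ω | X (m + 1) ω = w}
      = {ω | ∀ i ≤ m + 1, X i ω = γ i} := by
    rw [hcyl]
    ext ω
    simp only [Set.mem_inter_iff, Set.mem_ofPred_eq, Nat.le_succ_iff, or_imp, forall_and,
      forall_eq]
    simp [γ]
  rw [hcyl', hcyl, hX.2, hX.2, prod_range_succ, ← mul_assoc]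
  simp [γ, Fin.last]

variable [Countable S] [MeasurableSingletonClass S]

lemma measure_pathPrefix_inter_succ (hX : IsMarkovChain P X p o) (m : ℕ)
    (A : Set (Fin (m + 1) → S)) (w : S) :
    P (pathPrefix X m ⁻¹' A ∩ {ω | X (m + 1) ω = w})
      = ∑' t, P (pathPrefix X m ⁻¹' A ∩ {ω | X m ω = t}) * p t w := by
  have hf := hX.measurable_pathPrefix m
  have hfiber (g : Fin (m + 1) → S) (t : S) (ht : t ≠ g (Fin.last m)) :
      pathPrefix X m ⁻¹' {g} ∩ {ω | X m ω = t} = ∅ := by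
    ext ω
    simp only [Set.mem_inter_iff, Set.mem_preimage, Set.mem_singleton_iff, Set.mem_ofPred_eq,
      Set.mem_empty_iff_false, iff_false, not_and]
    rintro rfl rfl
    exact ht rfl
  have hlast (g : Fin (m + 1) → S) :
      pathPrefix X m ⁻¹' {g} ∩ {ω | X m ω = g (Fin.last m)} = pathPrefix X m ⁻¹' {g} :=
    Set.inter_eq_left.mpr fun ω hω => by rw [← Set.mem_singleton_iff.mp hω]; rfl
  rw [measure_preimage_inter_eq_tsum hf A (E := {ω | X (m + 1) ω = w})
    (hX.1 (m + 1) (measurableSet_singleton w))]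
  have hE (t : S) : MeasurableSet {ω | X m ω = t} := hX.1 m (measurableSet_singleton t)
  simp only [measure_preimage_inter_eq_tsum hf A (hE _), ← ENNReal.tsum_mul_right]
  rw [ENNReal.tsum_comm]
  refine tsum_congr fun g => ?_
  by_cases hg : g ∈ A
  · simp only [Set.indicator_of_mem hg, measure_pathPrefix_inter_eq hX]
    rw [tsum_eq_single (g (Fin.last m)) fun t ht => by simp [hfiber g t ht], hlast]
  · simp [Set.indicator_of_notMem hg]

lemma measure_pathPrefix_inter_add (hX : IsMarkovChain P X p o) (m l : ℕ)
    (A : Set (Fin (m + 1) → S)) (w : S) :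
    P (pathPrefix X m ⁻¹' A ∩ {ω | X (m + l) ω = w})
      = ∑' t, P (pathPrefix X m ⁻¹' A ∩ {ω | X m ω = t}) * kernelPow p l t w := by
  induction l generalizing w with
  | zero =>
    rw [tsum_eq_single w fun t ht => by simp [kernelPow_zero_apply, ht]]
    simp [kernelPow_zero_apply]
  | succ l ih =>
    -- an event of the first `m` steps is also one of the first `m + l` steps
    let A' : Set (Fin (m + l + 1) → S) :=
      {g | (fun j : Fin (m + 1) => g (Fin.castLE (by omega) j)) ∈ A}
    have hA' : pathPrefix X m ⁻¹' A = pathPrefix X (m + l) ⁻¹' A' := rfl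
    calc P (pathPrefix X m ⁻¹' A ∩ {ω | X (m + l + 1) ω = w})
        = ∑' s, P (pathPrefix X m ⁻¹' A ∩ {ω | X (m + l) ω = s}) * p s w := by
          rw [hA', hX.measure_pathPrefix_inter_succ]
      _ = ∑' t, P (pathPrefix X m ⁻¹' A ∩ {ω | X m ω = t}) * kernelPow p (l + 1) t w := by
          simp only [ih, kernelPow_succ_apply, ← ENNReal.tsum_mul_left, ← ENNReal.tsum_mul_right]
          rw [ENNReal.tsum_comm]
          simp only [mul_assoc]

lemma measure_eq_kernelPow (hX : IsMarkovChain P X p o) (k : ℕ) (z : S) :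
    P {ω | X k ω = z} = kernelPow p k o z := by
  classical
  have h := hX.measure_pathPrefix_inter_add 0 k Set.univ z
  simp only [Set.preimage_univ, Set.univ_inter, zero_add, hX.measure_zero_eq] at h
  rw [h, tsum_eq_single o fun t ht => by simp [ht]]
  simp

lemma measure_eq_and_eq_add (hX : IsMarkovChain P X p o) (k l : ℕ) (z w : S) :
    P {ω | X k ω = z ∧ X (k + l) ω = w} = kernelPow p k o z * kernelPow p l z w := by
  have h := hX.measure_pathPrefix_inter_add k l {g | g (Fin.last k) = z} w
  have hk : pathPrefix X k ⁻¹' {g | g (Fin.last k) = z} = {ω | X k ω = z} := rfl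
  have hempty (t : S) (ht : t ≠ z) : {ω | X k ω = z} ∩ {ω | X k ω = t} = ∅ := by
    ext ω
    simp only [Set.mem_inter_iff, Set.mem_ofPred_eq, Set.mem_empty_iff_false, iff_false, not_and]
    rintro rfl rfl
    exact ht rfl
  rw [hk, tsum_eq_single z fun t ht => by simp [hempty t ht]] at h
  rw [Set.ofPred_and]
  exact h.trans (by rw [Set.inter_self, hX.measure_eq_kernelPow])

open Classical in
lemma measure_eq_and_eq_le (hX : IsMarkovChain P X p o) (k i : ℕ) (z w : S) :
    P {ω | X k ω = z ∧ X i ω = w}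
      ≤ (if k ≤ i then kernelPow p k o z * kernelPow p (i - k) z w else 0)
        + (if i ≤ k then kernelPow p i o w * kernelPow p (k - i) w z else 0) := by
  rcases le_total k i with hki | hik
  · obtain ⟨l, rfl⟩ := Nat.exists_eq_add_of_le hki
    rw [hX.measure_eq_and_eq_add, if_pos hki, add_tsub_cancel_left]
    exact le_self_add
  · obtain ⟨l, rfl⟩ := Nat.exists_eq_add_of_le hik
    simp_rw [and_comm (a := X (i + l) _ = z)]
    rw [hX.measure_eq_and_eq_add, if_pos hik, add_tsub_cancel_left]
    exact le_add_self

lemma sum_measure_eq_and_eq_le (hX : IsMarkovChain P X p o) (n : ℕ) (z w : S) :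
    ∑ k ∈ range (n + 1), ∑ i ∈ range (n + 1), P {ω | X k ω = z ∧ X i ω = w}
      ≤ greenFn p n o z * greenFn p n z w + greenFn p n o w * greenFn p n w z := by
  classical
  calc ∑ k ∈ range (n + 1), ∑ i ∈ range (n + 1), P {ω | X k ω = z ∧ X i ω = w}
      ≤ ∑ k ∈ range (n + 1), ∑ i ∈ range (n + 1),
          ((if k ≤ i then kernelPow p k o z * kernelPow p (i - k) z w else 0)
            + (if i ≤ k then kernelPow p i o w * kernelPow p (k - i) w z else 0)) := by
        gcongr with k _ i _
        exact hX.measure_eq_and_eq_le k i z w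
    _ = ∑ k ∈ range (n + 1), ∑ i ∈ range (n + 1),
          (if k ≤ i then kernelPow p k o z * kernelPow p (i - k) z w else 0)
        + ∑ i ∈ range (n + 1), ∑ k ∈ range (n + 1),
          (if i ≤ k then kernelPow p i o w * kernelPow p (k - i) w z else 0) := by
        simp only [sum_add_distrib]
        exact congrArg _ sum_comm
    _ ≤ _ := add_le_add
        (sum_range_sum_range_ite_le (kernelPow p · o z) (kernelPow p · z w) (n + 1))
        (sum_range_sum_range_ite_le (kernelPow p · o w) (kernelPow p · w z) (n + 1))

end IsMarkovChain

end MarkovChain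

lemma ProbabilityTheory.IndepFun.lintegral_ite_eq {Ω α : Type*} [MeasurableSpace Ω]
    [MeasurableSpace α] [Countable α] [MeasurableSingletonClass α] [DecidableEq α]
    {P : Measure Ω} {f g : Ω → α} (hfg : IndepFun f g P) (hf : Measurable f)
    (hg : Measurable g) :
    ∫⁻ ω, (if f ω = g ω then 1 else 0) ∂P = ∑' a, P {ω | f ω = a} * P {ω | g ω = a} := by
  have hdiag := measurableSet_eq_fun hf hg
  have hfiber (a : α) : f ⁻¹' {a} ∩ {ω | f ω = g ω} = f ⁻¹' {a} ∩ g ⁻¹' {a} := by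
    ext ω
    simp only [Set.mem_inter_iff, Set.mem_preimage, Set.mem_singleton_iff, Set.mem_ofPred_eq]
    constructor <;> rintro ⟨rfl, h⟩ <;> exact ⟨rfl, h.symm⟩
  calc ∫⁻ ω, (if f ω = g ω then 1 else 0) ∂P = P (f ⁻¹' Set.univ ∩ {ω | f ω = g ω}) := by
        rw [Set.preimage_univ, Set.univ_inter, ← lintegral_indicator_one hdiag]
        exact lintegral_congr fun ω => by simp [Set.indicator_apply]
    _ = ∑' a, P {ω | f ω = a} * P {ω | g ω = a} := by
        simp only [measure_preimage_inter_eq_tsum hf Set.univ hdiag, Set.indicator_univ, hfiber]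
        exact tsum_congr fun a => hfg.measure_inter_preimage_eq_mul _ _
          (measurableSet_singleton a) (measurableSet_singleton a)

section IntersectionCount

variable {Ω S : Type*}

open Classical in
noncomputable def intersectionCount (X Y : ℕ → Ω → S) (n : ℕ) (ω : Ω) : ℝ≥0∞ :=
  ∑ k ∈ range (n + 1), ∑ m ∈ range (n + 1), if X k ω = Y m ω then 1 else 0

open Classical in
lemma intersectionCount_sq (X Y : ℕ → Ω → S) (n : ℕ) (ω : Ω) :
    intersectionCount X Y n ω ^ 2
      = ∑ k ∈ range (n + 1), ∑ i ∈ range (n + 1), ∑ m ∈ range (n + 1), ∑ j ∈ range (n + 1),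
          if (X k ω, X i ω) = (Y m ω, Y j ω) then 1 else 0 := by
  simp only [intersectionCount, sq, sum_mul_sum, ite_zero_mul_ite_zero, mul_one, Prod.mk.injEq]

variable [MeasurableSpace Ω] [MeasurableSpace S] [Countable S] [MeasurableSingletonClass S]
  {P : Measure Ω} {X Y : ℕ → Ω → S} {p : S → S → ℝ≥0∞} {o : S}

lemma lintegral_intersectionCount (hX : IsMarkovChain P X p o) (hY : IsMarkovChain P Y p o)
    (hind : IndepFun (fun ω n => X n ω) (fun ω n => Y n ω) P) (n : ℕ) :
    ∫⁻ ω, intersectionCount X Y n ω ∂P = ∑' z, greenFn p n o z ^ 2 := by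
  classical
  have hterm (k m : ℕ) : ∫⁻ ω, (if X k ω = Y m ω then 1 else 0) ∂P
      = ∑' z, kernelPow p k o z * kernelPow p m o z := by
    have hkm : IndepFun (X k) (Y m) P := hind.comp (measurable_pi_apply k) (measurable_pi_apply m)
    simp only [hkm.lintegral_ite_eq (hX.1 k) (hY.1 m), hX.measure_eq_kernelPow,
      hY.measure_eq_kernelPow]
  have hmeas (k m : ℕ) : Measurable fun ω => if X k ω = Y m ω then (1 : ℝ≥0∞) else 0 :=
    Measurable.ite (measurableSet_eq_fun (hX.1 k) (hY.1 m)) measurable_const measurable_const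
  unfold intersectionCount
  simp (disch := fun_prop) only [lintegral_finsetSum, hterm]
  simp only [greenFn, sq, sum_mul_sum, ← Summable.tsum_finsetSum fun _ _ => ENNReal.summable]

lemma lintegral_intersectionCount_sq (hX : IsMarkovChain P X p o) (hY : IsMarkovChain P Y p o)
    (hind : IndepFun (fun ω n => X n ω) (fun ω n => Y n ω) P) (n : ℕ) :
    ∫⁻ ω, intersectionCount X Y n ω ^ 2 ∂P
      = ∑' z, ∑' w, (∑ k ∈ range (n + 1), ∑ i ∈ range (n + 1), P {ω | X k ω = z ∧ X i ω = w})
          * ∑ m ∈ range (n + 1), ∑ j ∈ range (n + 1), P {ω | Y m ω = z ∧ Y j ω = w} := by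
  classical
  have hpair {Z : ℕ → Ω → S} (hZ : IsMarkovChain P Z p o) (k i : ℕ) :
      Measurable fun ω => (Z k ω, Z i ω) := (hZ.1 k).prodMk (hZ.1 i)
  have hterm (k i m j : ℕ) :
      ∫⁻ ω, (if (X k ω, X i ω) = (Y m ω, Y j ω) then 1 else 0) ∂P
        = ∑' z, ∑' w, P {ω | X k ω = z ∧ X i ω = w} * P {ω | Y m ω = z ∧ Y j ω = w} := by
    have hind' : IndepFun (fun ω => (X k ω, X i ω)) (fun ω => (Y m ω, Y j ω)) P :=
      hind.comp ((measurable_pi_apply k).prodMk (measurable_pi_apply i))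
        ((measurable_pi_apply m).prodMk (measurable_pi_apply j))
    rw [hind'.lintegral_ite_eq (hpair hX k i) (hpair hY m j), ENNReal.tsum_prod']
    simp only [Prod.mk.injEq]
  have hmeas (k i m j : ℕ) :
      Measurable fun ω => if (X k ω, X i ω) = (Y m ω, Y j ω) then (1 : ℝ≥0∞) else 0 :=
    Measurable.ite (measurableSet_eq_fun (hpair hX k i) (hpair hY m j)) measurable_const
      measurable_const
  simp only [intersectionCount_sq]
  simp (disch := fun_prop) only [lintegral_finsetSum, hterm]
  simp only [sum_mul]
  simp only [mul_sum, ← Summable.tsum_finsetSum fun _ _ => ENNReal.summable]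

end IntersectionCount

open Classical in
theorem second_moment_intersections_transitive_general
    {Ω S : Type*} [MeasurableSpace Ω] [Countable S] [MeasurableSpace S]
    [DiscreteMeasurableSpace S]
    (P : Measure Ω)
    (X Y : ℕ → Ω → S) (p : S → S → ENNReal) (o : S)
    (htrans : ∀ x y : S, ∃ π : Equiv.Perm S, (∀ a b, p (π a) (π b) = p a b) ∧ π x = y)
    (hX : IsMarkovChain P X p o) (hY : IsMarkovChain P Y p o)
    (hind : IndepFun (fun ω n => X n ω) (fun ω n => Y n ω) P)
    (n : ℕ) :
    ∫⁻ ω, (∑ k ∈ Finset.range (n + 1), ∑ m ∈ Finset.range (n + 1),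
        if X k ω = Y m ω then (1 : ENNReal) else 0) ^ 2 ∂P
      ≤ 4 * (∫⁻ ω, ∑ k ∈ Finset.range (n + 1), ∑ m ∈ Finset.range (n + 1),
          (if X k ω = Y m ω then (1 : ENNReal) else 0) ∂P) ^ 2 := by
  calc ∫⁻ ω, intersectionCount X Y n ω ^ 2 ∂P
      = ∑' z, ∑' w, (∑ k ∈ range (n + 1), ∑ i ∈ range (n + 1), P {ω | X k ω = z ∧ X i ω = w})
          * ∑ m ∈ range (n + 1), ∑ j ∈ range (n + 1), P {ω | Y m ω = z ∧ Y j ω = w} :=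
        lintegral_intersectionCount_sq hX hY hind n
    _ ≤ ∑' z, ∑' w,
          (greenFn p n o z * greenFn p n z w + greenFn p n o w * greenFn p n w z) ^ 2 := by
        gcongr with z w
        rw [sq]
        exact mul_le_mul' (hX.sum_measure_eq_and_eq_le n z w)
          (hY.sum_measure_eq_and_eq_le n z w)
    _ ≤ 4 * (∑' z, greenFn p n o z ^ 2) ^ 2 :=
        tsum_tsum_add_sq_le (greenFn p n) o (tsum_greenFn_sq_eq_of_transitive htrans n o)
    _ = 4 * (∫⁻ ω, intersectionCount X Y n ω ∂P) ^ 2 := by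
        rw [lintegral_intersectionCount hX hY hind n]

open Classical in
/-- For a transition kernel invariant under a transitive group of
permutations, the intersection count `I_n` of two independent chains started at `o`
satisfies `E[I_n²] ≤ 4 (E[I_n])²`. -/
theorem second_moment_intersections_transitive
    {Ω S : Type*} [MeasurableSpace Ω] [Countable S] [MeasurableSpace S]
    [DiscreteMeasurableSpace S]
    (P : Measure Ω) [IsProbabilityMeasure P]
    (X Y : ℕ → Ω → S) (p : S → S → ENNReal) (o : S)
    (htrans : ∀ x y : S, ∃ π : Equiv.Perm S, (∀ a b, p (π a) (π b) = p a b) ∧ π x = y)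
    (hX : IsMarkovChain P X p o) (hY : IsMarkovChain P Y p o)
    (hind : IndepFun (fun ω n => X n ω) (fun ω n => Y n ω) P)
    (n : ℕ) :
    ∫⁻ ω, (∑ k ∈ Finset.range (n + 1), ∑ m ∈ Finset.range (n + 1),
        if X k ω = Y m ω then (1 : ENNReal) else 0) ^ 2 ∂P
      ≤ 4 * (∫⁻ ω, ∑ k ∈ Finset.range (n + 1), ∑ m ∈ Finset.range (n + 1),
          (if X k ω = Y m ω then (1 : ENNReal) else 0) ∂P) ^ 2 :=
  second_moment_intersections_transitive_general P X Y p o htrans hX hY hind n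
end
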